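/- arXiv:1610.04099 — 5 statements merged into one kernel-verified Lean document; each statement's English description precedes it below -/
import Mathlib

section
/- Suppose f, g ∈ Homeo⁺(ℝ) satisfy supp f = (x, z) and supp g = (y, w) for some −∞ ≤ x < y < z < w ≤ ∞, that f(t) ≥ t and g(t) ≥ t for all t ∈ ℝ, and that g(f(y)) ≥ z. Then the subgroup ⟨f, g⟩ of Homeo⁺(ℝ) is isomorphic to Thompson's group F. -/
/-- The group of orientation-preserving homeomorphisms of `ℝ`,
realized as order-automorphisms of `ℝ`. -/
abbrev HomeoR := ℝ ≃o ℝ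

/-- The support of a homeomorphism of `ℝ`. -/
def supp (f : HomeoR) : Set ℝ := {x : ℝ | f x ≠ x}

/-- The support of a subgroup of `Homeo⁺(ℝ)`. -/
def suppG (G : Subgroup HomeoR) : Set ℝ := ⋃ g ∈ G, supp g

/-- The open interval in `ℝ` with `EReal` endpoints. -/
def eIoo (a b : EReal) : Set ℝ := {t : ℝ | a < (t : EReal) ∧ (t : EReal) < b}

/-- `a b : Fin n → EReal` are the endpoints of an `n`-chain of intervals. -/
def IsChainOfIntervals {n : ℕ} (a b : Fin n → EReal) : Prop :=
  (∀ i, a i < b i) ∧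
  (∀ (i : ℕ) (h : i + 1 < n),
      a ⟨i, by omega⟩ < a ⟨i + 1, h⟩ ∧ a ⟨i + 1, h⟩ < b ⟨i, by omega⟩ ∧
      b ⟨i, by omega⟩ < b ⟨i + 1, h⟩) ∧
  (∀ (i : ℕ) (h : i + 2 < n), b ⟨i, by omega⟩ ≤ a ⟨i + 2, h⟩)

/-- `f : Fin n → HomeoR` is a family of generators of an `n`-prechain group. -/
def IsPrechainGens {n : ℕ} (f : Fin n → HomeoR) : Prop :=
  2 ≤ n ∧
  ∃ a b : Fin n → EReal, IsChainOfIntervals a b ∧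
    (∀ i, supp (f i) = eIoo (a i) (b i)) ∧
    (∀ i, ∀ t : ℝ, t ≤ f i t)

open scoped commutatorElement in
/-- The relators of Thompson's group `F`: `[b⁻¹a, aba⁻¹]` and `[b⁻¹a, a²ba⁻²]`. -/
def thompsonFRels : Set (FreeGroup (Fin 2)) :=
  letI a : FreeGroup (Fin 2) := FreeGroup.of 0
  letI b : FreeGroup (Fin 2) := FreeGroup.of 1
  {⁅b⁻¹ * a, a * b * a⁻¹⁆, ⁅b⁻¹ * a, a ^ 2 * b * a⁻¹ ^ 2⁆}

/-- Thompson's group `F`. -/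
def ThompsonF : Type := PresentedGroup thompsonFRels

instance : Group ThompsonF := by unfold ThompsonF; infer_instance

/-- The relators of the Higman–Thompson group `Fₙ`:
`gᵢ⁻¹ gⱼ gᵢ g_{j+n-1}⁻¹` for `i < j`. -/
def higmanThompsonRels (n : ℕ) : Set (FreeGroup ℕ) :=
  {r | ∃ i j : ℕ, i < j ∧
      r = (FreeGroup.of i)⁻¹ * FreeGroup.of j * FreeGroup.of i *
        (FreeGroup.of (j + n - 1))⁻¹}

/-- The Higman–Thompson group `Fₙ`. -/
def HigmanThompsonF (n : ℕ) : Type := PresentedGroup (higmanThompsonRels n)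

instance (n : ℕ) : Group (HigmanThompsonF n) := by unfold HigmanThompsonF; infer_instance

/-- `f : Fin n → HomeoR` is a family of generators of an `n`-chain group:
a prechain family such that each pair of consecutive generators generates a copy of
Thompson's group `F`. -/
def IsChainGens {n : ℕ} (f : Fin n → HomeoR) : Prop :=
  IsPrechainGens f ∧
  ∀ (i : ℕ) (h : i + 1 < n),
    Nonempty ((Subgroup.closure {f ⟨i, by omega⟩, f ⟨i + 1, h⟩} : Subgroup HomeoR) ≃* ThompsonF)

/-- A subgroup of `Homeo⁺(ℝ)` is an `n`-chain group if it is generated by an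
`n`-family of chain group generators. -/
def IsChainGroup (n : ℕ) (G : Subgroup HomeoR) : Prop :=
  ∃ f : Fin n → HomeoR, IsChainGens f ∧ G = Subgroup.closure (Set.range f)

/-- The orbit of a point under a subgroup of `Homeo⁺(ℝ)`. -/
def orbitG (G : Subgroup HomeoR) (x : ℝ) : Set ℝ := {y : ℝ | ∃ g ∈ G, g x = y}

/-!
Put `a = f g` and `b = g`, which generate the same group as `f` and `g`. Both move points to
the right, `supp a = (x, w)` and `supp b = (y, w)`, so `x₀ = a`, `xₙ₊₁ = aⁿ b a⁻ⁿ` have supports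
`(σₙ, w)` with `σ₀ = x < σ₁ = y < σ₂ = f y < ⋯`. The hypothesis `z ≤ g (f y)` puts
`supp (b⁻¹ a) = (x, g⁻¹ z)` to the left of `supp x₂` and `supp x₃`, so the relators of `F` hold
and `F` maps onto `⟨f, g⟩`. Every element of `F` is `p⁻¹ q` with `p`, `q` positive words
`x_{i_k} ⋯ x_{i_1}`, `i_1 ≤ ⋯ ≤ i_k`, and such a word is determined by its image: its smallest
index `m` is the least `n` for which the image moves the points of `(σₙ, σₙ₊₁)`.
-/

theorem closure_mul_pair {G : Type*} [Group G] (a b : G) :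
    Subgroup.closure {a * b, b} = Subgroup.closure {a, b} := by
  have hb {c : G} : b ∈ Subgroup.closure {c, b} :=
    Subgroup.subset_closure (Set.mem_insert_of_mem _ rfl)
  have ha {c : G} : c ∈ Subgroup.closure {c, b} := Subgroup.subset_closure (Set.mem_insert _ _)
  apply le_antisymm <;> rw [Subgroup.closure_le, Set.insert_subset_iff, Set.singleton_subset_iff]
  · exact ⟨mul_mem ha hb, hb⟩
  · exact ⟨by simpa using mul_mem ha (inv_mem (hb (c := a * b))), hb⟩

section ThompsonRelations

variable {G : Type*} [Group G]

def thompsonGen (a b : G) : ℕ → G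
  | 0 => a
  | n + 1 => a ^ n * b * (a ^ n)⁻¹

/-- The two defining relators of `F`, as `thompsonGen a b 2 = a b a⁻¹` and
`thompsonGen a b 3 = a² b a⁻²`. -/
def IsThompsonPair (a b : G) : Prop :=
  Commute (b⁻¹ * a) (thompsonGen a b 2) ∧ Commute (b⁻¹ * a) (thompsonGen a b 3)

theorem map_thompsonGen {H : Type*} [Group H] (φ : G →* H) (a b : G) (n : ℕ) :
    φ (thompsonGen a b n) = thompsonGen (φ a) (φ b) n := by
  cases n <;> simp [thompsonGen]

theorem thompsonGen_succ_succ (a b : G) (n : ℕ) :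
    thompsonGen a b (n + 2) = a * thompsonGen a b (n + 1) * a⁻¹ := by
  simp only [thompsonGen, pow_succ']
  group

theorem conj_pow_thompsonGen (a b : G) (j n : ℕ) :
    a ^ j * thompsonGen a b (n + 1) * (a ^ j)⁻¹ = thompsonGen a b (n + 1 + j) := by
  simp only [thompsonGen, add_right_comm n 1 j, pow_add]
  group

theorem commute_inv_mul_iff {a b y : G} :
    Commute (b⁻¹ * a) y ↔ a * y * a⁻¹ = b * y * b⁻¹ := by
  rw [commute_iff_eq]
  constructor <;> intro h
  · calc a * y * a⁻¹ = b * (b⁻¹ * a * y) * a⁻¹ := by group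
      _ = b * y * b⁻¹ := by rw [h]; group
  · calc b⁻¹ * a * y = b⁻¹ * (a * y * a⁻¹) * a := by group
      _ = y * (b⁻¹ * a) := by rw [h]; group

theorem commute_iff_conj_thompsonGen {a b : G} {m : ℕ} :
    Commute (b⁻¹ * a) (thompsonGen a b (m + 1)) ↔
      b * thompsonGen a b (m + 1) * b⁻¹ = thompsonGen a b (m + 2) := by
  rw [commute_inv_mul_iff, thompsonGen_succ_succ, eq_comm]

namespace IsThompsonPair

variable {a b : G} (h : IsThompsonPair a b)
include h

theorem commute_thompsonGen {m : ℕ} (hm : 2 ≤ m) : Commute (b⁻¹ * a) (thompsonGen a b m) := by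
  suffices ∀ m, 2 ≤ m → Commute (b⁻¹ * a) (thompsonGen a b m) ∧
      Commute (b⁻¹ * a) (thompsonGen a b (m + 1)) from (this m hm).1
  intro m hm
  induction m, hm using Nat.le_induction with
  | base => exact h
  | succ m hm ih =>
    refine ⟨ih.2, ?_⟩
    obtain ⟨k, rfl⟩ : ∃ k, m = k + 1 := ⟨m - 1, by omega⟩
    have hconj : thompsonGen a b (k + 3) =
        thompsonGen a b 2 * thompsonGen a b (k + 2) * (thompsonGen a b 2)⁻¹ :=
      calc thompsonGen a b (k + 3)
          = a * (b * thompsonGen a b (k + 1) * b⁻¹) * a⁻¹ := by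
            rw [commute_iff_conj_thompsonGen.1 ih.1, thompsonGen_succ_succ]
        _ = (a * b * a⁻¹) * (a * thompsonGen a b (k + 1) * a⁻¹) * (a * b * a⁻¹)⁻¹ := by group
        _ = _ := by rw [← thompsonGen_succ_succ]; simp only [thompsonGen, pow_one]
    rw [hconj]
    exact (h.1.mul_right ih.2).mul_right h.1.inv_right

theorem conj_thompsonGen {k n : ℕ} (hkn : k < n) :
    thompsonGen a b k * thompsonGen a b n * (thompsonGen a b k)⁻¹ = thompsonGen a b (n + 1) := by
  cases k with
  | zero =>
    obtain ⟨m, rfl⟩ : ∃ m, n = m + 1 := ⟨n - 1, by omega⟩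
    exact (thompsonGen_succ_succ a b m).symm
  | succ j =>
    obtain ⟨m, rfl⟩ : ∃ m, n = m + 1 + j := ⟨n - 1 - j, by omega⟩
    have hb := commute_iff_conj_thompsonGen.1 (h.commute_thompsonGen (m := m + 1) (by omega))
    calc thompsonGen a b (j + 1) * thompsonGen a b (m + 1 + j) * (thompsonGen a b (j + 1))⁻¹
        = a ^ j * (b * thompsonGen a b (m + 1) * b⁻¹) * (a ^ j)⁻¹ := by
          rw [← conj_pow_thompsonGen]; simp only [thompsonGen]; group
      _ = thompsonGen a b (m + 1 + j + 1) := by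
          rw [hb, conj_pow_thompsonGen]; ring_nf

theorem thompsonGen_mul_thompsonGen {k n : ℕ} (hkn : k < n) :
    thompsonGen a b k * thompsonGen a b n = thompsonGen a b (n + 1) * thompsonGen a b k := by
  rw [← h.conj_thompsonGen hkn]; group

end IsThompsonPair

end ThompsonRelations

section PositiveWords

variable {G : Type*} [Group G]

def thompsonWord (a b : G) : List ℕ → G
  | [] => 1
  | i :: l => thompsonWord a b l * thompsonGen a b i

theorem map_thompsonWord {H : Type*} [Group H] (φ : G →* H) (a b : G) (l : List ℕ) :
    φ (thompsonWord a b l) = thompsonWord (φ a) (φ b) l := by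
  induction l with
  | nil => exact map_one φ
  | cons i l ih => simp only [thompsonWord, map_mul, ih, map_thompsonGen]

def insertShift (i : ℕ) : List ℕ → List ℕ
  | [] => [i]
  | j :: l => if i ≤ j then i :: j :: l else j :: insertShift (i + 1) l

theorem le_of_mem_insertShift {c i : ℕ} {l : List ℕ} (hi : c ≤ i) (hl : ∀ j ∈ l, c ≤ j) :
    ∀ j ∈ insertShift i l, c ≤ j := by
  induction l generalizing i with
  | nil => simpa [insertShift] using hi
  | cons k l ih =>
    simp only [List.forall_mem_cons] at hl
    unfold insertShift
    split_ifs
    · simpa [hi] using hl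
    · simpa [hl.1] using ih (by omega) hl.2

theorem pairwise_insertShift (i : ℕ) {l : List ℕ} (hl : l.Pairwise (· ≤ ·)) :
    (insertShift i l).Pairwise (· ≤ ·) := by
  induction l generalizing i with
  | nil => simp [insertShift]
  | cons j l ih =>
    rw [List.pairwise_cons] at hl
    unfold insertShift
    split_ifs with hij
    · exact List.pairwise_cons.2 ⟨by simpa [hij] using fun k hk => hij.trans (hl.1 k hk),
        List.pairwise_cons.2 hl⟩
    · exact List.pairwise_cons.2 ⟨le_of_mem_insertShift (by omega) hl.1, ih _ hl.2⟩

abbrev thompsonMonoid (a b : G) : Submonoid G := Submonoid.closure (Set.range (thompsonGen a b))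

theorem thompsonGen_mem_thompsonMonoid (a b : G) (i : ℕ) :
    thompsonGen a b i ∈ thompsonMonoid a b :=
  Submonoid.subset_closure (Set.mem_range_self i)

namespace IsThompsonPair

variable {a b : G} (h : IsThompsonPair a b)
include h

theorem thompsonWord_insertShift (i : ℕ) (l : List ℕ) :
    thompsonWord a b (insertShift i l) = thompsonWord a b l * thompsonGen a b i := by
  induction l generalizing i with
  | nil => simp [insertShift, thompsonWord]
  | cons j l ih =>
    unfold insertShift
    split_ifs with hij
    · rfl
    · simp only [thompsonWord, ih, mul_assoc, h.thompsonGen_mul_thompsonGen (by omega : j < i)]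

theorem exists_sorted_thompsonWord {p : G} (hp : p ∈ thompsonMonoid a b) :
    ∃ l : List ℕ, l.Pairwise (· ≤ ·) ∧ thompsonWord a b l = p := by
  induction hp using Submonoid.closure_induction_right with
  | one => exact ⟨[], List.Pairwise.nil, rfl⟩
  | mul_right p _ q hq ih =>
    obtain ⟨i, rfl⟩ := hq
    obtain ⟨l, hl, rfl⟩ := ih
    exact ⟨insertShift i l, pairwise_insertShift i hl, h.thompsonWord_insertShift i l⟩

theorem exists_thompsonGen_mul_inv {i j : ℕ} (hij : j ≠ i) :
    ∃ c d, thompsonGen a b j * (thompsonGen a b i)⁻¹ =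
      (thompsonGen a b c)⁻¹ * thompsonGen a b d := by
  rcases Nat.lt_or_gt_of_ne hij with hji | hij
  · exact ⟨i + 1, j, by rw [← h.conj_thompsonGen hji]; group⟩
  · exact ⟨i, j + 1, by rw [← h.conj_thompsonGen hij]; group⟩

theorem mul_inv_thompsonGen_mem {q : G} (hq : q ∈ thompsonMonoid a b) (i : ℕ) :
    q * (thompsonGen a b i)⁻¹ ∈ thompsonMonoid a b ∨
      ∃ c, ∃ u ∈ thompsonMonoid a b, q * (thompsonGen a b i)⁻¹ = (thompsonGen a b c)⁻¹ * u := by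
  induction hq using Submonoid.closure_induction_right generalizing i with
  | one => exact Or.inr ⟨i, 1, one_mem _, by group⟩
  | mul_right q hq _ hj ih =>
    obtain ⟨j, rfl⟩ := hj
    by_cases hij : j = i
    · subst hij; simpa using Or.inl hq
    obtain ⟨c, d, hcd⟩ := h.exists_thompsonGen_mul_inv hij
    have hd := thompsonGen_mem_thompsonMonoid a b d
    rw [mul_assoc, hcd, ← mul_assoc]
    rcases ih c with hmem | ⟨e, u, hu, hqu⟩
    · exact Or.inl (mul_mem hmem hd)
    · exact Or.inr ⟨e, u * thompsonGen a b d, mul_mem hu hd, by rw [hqu, mul_assoc]⟩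

theorem exists_mul_inv_eq_inv_mul {q r : G} (hq : q ∈ thompsonMonoid a b)
    (hr : r ∈ thompsonMonoid a b) :
    ∃ p ∈ thompsonMonoid a b, ∃ p' ∈ thompsonMonoid a b, q * r⁻¹ = p⁻¹ * p' := by
  induction hr using Submonoid.closure_induction_left with
  | one => exact ⟨1, one_mem _, q, hq, by group⟩
  | mul_left s hs r _ ih =>
    obtain ⟨i, rfl⟩ := hs
    obtain ⟨p, hp, p', hp', hpp'⟩ := ih
    have hmul : q * (thompsonGen a b i * r)⁻¹ = p⁻¹ * (p' * (thompsonGen a b i)⁻¹) := by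
      rw [mul_inv_rev, ← mul_assoc, hpp', mul_assoc]
    rw [hmul]
    rcases h.mul_inv_thompsonGen_mem hp' i with hmem | ⟨c, u, hu, hcu⟩
    · exact ⟨p, hp, _, hmem, rfl⟩
    · exact ⟨thompsonGen a b c * p, mul_mem (thompsonGen_mem_thompsonMonoid a b c) hp, u, hu,
        by rw [hcu, mul_inv_rev, mul_assoc]⟩

theorem exists_eq_inv_mul {e : G} (he : e ∈ Subgroup.closure (Set.range (thompsonGen a b))) :
    ∃ p ∈ thompsonMonoid a b, ∃ q ∈ thompsonMonoid a b, e = p⁻¹ * q := by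
  induction he using Subgroup.closure_induction_right with
  | one => exact ⟨1, one_mem _, 1, one_mem _, by group⟩
  | mul_right e _ s hs ih =>
    obtain ⟨p, hp, q, hq, rfl⟩ := ih
    exact ⟨p, hp, q * s, mul_mem hq (Submonoid.subset_closure hs), by group⟩
  | mul_inv_cancel e _ s hs ih =>
    obtain ⟨p, hp, q, hq, rfl⟩ := ih
    obtain ⟨p', hp', q', hq', hpq⟩ :=
      h.exists_mul_inv_eq_inv_mul hq (Submonoid.subset_closure hs)
    exact ⟨p' * p, mul_mem hp' hp, q', hq', by rw [mul_assoc, hpq]; group⟩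

end IsThompsonPair

end PositiveWords

namespace ThompsonF

def genA : ThompsonF := PresentedGroup.of 0

def genB : ThompsonF := PresentedGroup.of 1

variable {G : Type*} [Group G]

theorem lift_rels_eq_one_iff (a b : G) :
    (∀ r ∈ thompsonFRels, FreeGroup.lift ![a, b] r = 1) ↔ IsThompsonPair a b := by
  simp [thompsonFRels, IsThompsonPair, thompsonGen, map_commutatorElement,
    commutatorElement_eq_one_iff_commute]

def lift {a b : G} (h : IsThompsonPair a b) : ThompsonF →* G :=
  PresentedGroup.toGroup ((lift_rels_eq_one_iff a b).2 h)

theorem lift_genA {a b : G} (h : IsThompsonPair a b) : lift h genA = a :=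
  PresentedGroup.toGroup.of _

theorem lift_genB {a b : G} (h : IsThompsonPair a b) : lift h genB = b :=
  PresentedGroup.toGroup.of _

theorem isThompsonPair_genA_genB : IsThompsonPair genA genB := by
  refine (lift_rels_eq_one_iff genA genB).1 fun r hr => ?_
  have hmk : FreeGroup.lift ![genA, genB] = PresentedGroup.mk thompsonFRels := by
    ext i; fin_cases i <;> rfl
  rw [hmk]
  exact PresentedGroup.one_of_mem hr

theorem closure_genA_genB : Subgroup.closure {genA, genB} = (⊤ : Subgroup ThompsonF) := by
  refine eq_top_iff.2 ((PresentedGroup.closure_range_of thompsonFRels).ge.trans ?_)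
  apply (Subgroup.closure_le _).2
  rintro _ ⟨i, rfl⟩
  fin_cases i
  exacts [Subgroup.subset_closure (Set.mem_insert _ _),
    Subgroup.subset_closure (Set.mem_insert_of_mem _ rfl)]

theorem closure_range_thompsonGen : Subgroup.closure (Set.range (thompsonGen genA genB)) = ⊤ := by
  rw [eq_top_iff, ← closure_genA_genB, Subgroup.closure_le]
  rintro _ (rfl | rfl)
  exacts [Subgroup.subset_closure ⟨0, rfl⟩,
    Subgroup.subset_closure ⟨1, by simp [thompsonGen]⟩]

theorem range_lift {a b : G} (h : IsThompsonPair a b) :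
    (lift h).range = Subgroup.closure {a, b} := by
  rw [MonoidHom.range_eq_map, ← closure_genA_genB, MonoidHom.map_closure, Set.image_pair,
    lift_genA, lift_genB]

theorem lift_injective {a b : G} (h : IsThompsonPair a b)
    (hw : ∀ l₁ l₂ : List ℕ, l₁.Pairwise (· ≤ ·) → l₂.Pairwise (· ≤ ·) →
      thompsonWord a b l₁ = thompsonWord a b l₂ → l₁ = l₂) :
    Function.Injective (lift h) := by
  rw [injective_iff_map_eq_one]
  intro e he
  have hF := isThompsonPair_genA_genB
  obtain ⟨p, hp, q, hq, rfl⟩ :=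
    hF.exists_eq_inv_mul (closure_range_thompsonGen ▸ Subgroup.mem_top e)
  obtain ⟨l₁, hl₁, rfl⟩ := hF.exists_sorted_thompsonWord hp
  obtain ⟨l₂, hl₂, rfl⟩ := hF.exists_sorted_thompsonWord hq
  rw [map_mul, map_inv, inv_mul_eq_one, map_thompsonWord, map_thompsonWord, lift_genA,
    lift_genB] at he
  rw [hw l₁ l₂ hl₁ hl₂ he, inv_mul_cancel]

end ThompsonF

section Support

theorem lt_apply_of_mem_supp {p : HomeoR} (hp : ∀ t, t ≤ p t) {t : ℝ} (ht : t ∈ supp p) :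
    t < p t :=
  (hp t).lt_of_ne (Ne.symm ht)

theorem supp_inv (p : HomeoR) : supp p⁻¹ = supp p := by
  ext t
  exact not_congr (p.symm_apply_eq.trans eq_comm)

theorem supp_pow_subset (p : HomeoR) (n : ℕ) : supp (p ^ n) ⊆ supp p := by
  intro t
  contrapose
  simp only [supp, Set.mem_ofPred_eq, not_not]
  intro ht
  induction n with
  | zero => rfl
  | succ n ih => rw [pow_succ, RelIso.mul_apply, ht, ih]

theorem apply_eq_of_notMem_supp {p : HomeoR} {t : ℝ} (h : t ∉ supp p) : p t = t :=
  not_not.1 h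

theorem image_eq_self_of_supp_subset {p : HomeoR} {s : Set ℝ} (h : supp p ⊆ s) : p '' s = s := by
  have hfix : p '' sᶜ = sᶜ :=
    Set.EqOn.image_eq_self fun _ ht => apply_eq_of_notMem_supp fun hp => ht (h hp)
  rw [← compl_compl s, Set.image_compl_eq p.bijective, hfix]

theorem apply_mem_supp {p : HomeoR} {t : ℝ} (h : t ∈ supp p) : p t ∈ supp p :=
  image_eq_self_of_supp_subset subset_rfl ▸ Set.mem_image_of_mem p h

theorem supp_conj (p q : HomeoR) : supp (p * q * p⁻¹) = p '' supp q := by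
  ext t
  rw [← p.apply_symm_apply t, p.injective.mem_set_image]
  simp only [supp, Set.mem_ofPred_eq, RelIso.mul_apply, RelIso.inv_apply_self]
  exact p.injective.ne_iff

theorem supp_mul_of_le_apply {p q : HomeoR} (hp : ∀ t, t ≤ p t) (hq : ∀ t, t ≤ q t) :
    supp (p * q) = supp p ∪ supp q := by
  ext t
  simp only [supp, Set.mem_ofPred_eq, Set.mem_union, RelIso.mul_apply]
  constructor
  · intro h
    by_contra! hpq
    rw [hpq.2, hpq.1] at h
    exact h rfl
  · intro h heq
    have hqt : q t = t := le_antisymm ((hp (q t)).trans_eq heq) (hq t)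
    rw [hqt] at heq
    exact h.elim (· heq) (· hqt)

theorem commute_of_disjoint_supp {p q : HomeoR} (h : Disjoint (supp p) (supp q)) :
    Commute p q := by
  have key : ∀ {r s : HomeoR} {t : ℝ}, Disjoint (supp r) (supp s) → t ∈ supp r →
      r (s t) = s (r t) := fun hrs ht => by
    rw [apply_eq_of_notMem_supp (Set.disjoint_left.1 hrs ht),
      apply_eq_of_notMem_supp (Set.disjoint_left.1 hrs (apply_mem_supp ht))]
  ext t
  change p (q t) = q (p t)
  by_cases hp : t ∈ supp p
  · exact key h hp
  by_cases hq : t ∈ supp q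
  · exact (key h.symm hq).symm
  rw [apply_eq_of_notMem_supp hp, apply_eq_of_notMem_supp hq, apply_eq_of_notMem_supp hp]

end Support

section Intervals

theorem eIoo_subset_eIoo {a a' b b' : EReal} (ha : a ≤ a') (hb : b' ≤ b) :
    eIoo a' b' ⊆ eIoo a b :=
  fun _ ht => ⟨ha.trans_lt ht.1, ht.2.trans_le hb⟩

theorem eIoo_union_eIoo {a b c d : EReal} (hab : a ≤ b) (hbc : b < c) (hcd : c ≤ d) :
    eIoo a c ∪ eIoo b d = eIoo a d := by
  ext t
  simp only [eIoo, Set.mem_union, Set.mem_ofPred_eq]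
  constructor
  · rintro (⟨h₁, h₂⟩ | ⟨h₁, h₂⟩)
    exacts [⟨h₁, h₂.trans_le hcd⟩, ⟨hab.trans_lt h₁, h₂⟩]
  · rintro ⟨h₁, h₂⟩
    by_cases htc : (t : EReal) < c
    exacts [Or.inl ⟨h₁, htc⟩, Or.inr ⟨hbc.trans_le (not_lt.1 htc), h₂⟩]

theorem disjoint_eIoo {a b c d : EReal} (hbc : b ≤ c) : Disjoint (eIoo a b) (eIoo c d) :=
  Set.disjoint_left.2 fun _ h₁ h₂ => (h₁.2.trans_le hbc).not_gt h₂.1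

theorem image_eIoo_coe_left {p : HomeoR} {w : EReal} (hp : supp p ⊆ eIoo ⊥ w) (c : ℝ) :
    p '' eIoo c w = eIoo (p c : ℝ) w := by
  have hsplit : ∀ c : ℝ, eIoo c w = Set.Ioi c ∩ eIoo ⊥ w := fun c => by
    ext t; simp [eIoo]
  rw [hsplit, hsplit, Set.image_inter p.injective, OrderIso.image_Ioi,
    image_eq_self_of_supp_subset hp]

theorem image_eIoo_coe_right {p : HomeoR} {x : EReal} (hp : supp p ⊆ eIoo x ⊤) (d : ℝ) :
    p '' eIoo x d = eIoo x (p d : ℝ) := by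
  have hsplit : ∀ d : ℝ, eIoo x d = eIoo x ⊤ ∩ Set.Iio d := fun d => by
    ext t; simp [eIoo]
  rw [hsplit, hsplit, Set.image_inter p.injective, OrderIso.image_Iio,
    image_eq_self_of_supp_subset hp]

end Intervals

section NestedPair

structure IsNestedPair (A B : HomeoR) (x : EReal) (y : ℝ) (w : EReal) : Prop where
  supp_A : supp A = eIoo x w
  supp_B : supp B = eIoo y w
  x_lt_y : x < y
  y_lt_w : (y : EReal) < w
  le_A : ∀ t, t ≤ A t
  le_B : ∀ t, t ≤ B t

def leftEndpoint (A : HomeoR) (x : EReal) (y : ℝ) : ℕ → EReal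
  | 0 => x
  | n + 1 => ((A ^ n) y : ℝ)

namespace IsNestedPair

variable {A B : HomeoR} {x w : EReal} {y : ℝ} (hP : IsNestedPair A B x y w)
include hP

theorem pow_apply_mem_supp (n : ℕ) : (A ^ n) y ∈ supp A := by
  rw [← image_eq_self_of_supp_subset (supp_pow_subset A n)]
  exact Set.mem_image_of_mem _ (hP.supp_A ▸ ⟨hP.x_lt_y, hP.y_lt_w⟩)

theorem leftEndpoint_lt (n : ℕ) : leftEndpoint A x y n < w := by
  cases n with
  | zero => exact hP.x_lt_y.trans hP.y_lt_w
  | succ n => exact (hP.supp_A ▸ hP.pow_apply_mem_supp n).2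

theorem strictMono_leftEndpoint : StrictMono (leftEndpoint A x y) := by
  refine strictMono_nat_of_lt_succ fun n => ?_
  cases n with
  | zero => exact hP.x_lt_y
  | succ n =>
    simp only [leftEndpoint, EReal.coe_lt_coe_iff, pow_succ', RelIso.mul_apply]
    exact lt_apply_of_mem_supp hP.le_A (hP.pow_apply_mem_supp n)

theorem supp_thompsonGen (n : ℕ) :
    supp (thompsonGen A B n) = eIoo (leftEndpoint A x y n) w := by
  cases n with
  | zero => exact hP.supp_A
  | succ n =>
    rw [thompsonGen, supp_conj, hP.supp_B]
    exact image_eIoo_coe_left ((supp_pow_subset A n).trans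
      (hP.supp_A ▸ eIoo_subset_eIoo bot_le le_rfl)) y

theorem le_thompsonGen_apply (n : ℕ) (t : ℝ) : t ≤ thompsonGen A B n t := by
  cases n with
  | zero => exact hP.le_A t
  | succ n =>
    calc t = (A ^ n) ((A ^ n)⁻¹ t) := (RelIso.apply_inv_self _ t).symm
      _ ≤ (A ^ n) (B ((A ^ n)⁻¹ t)) := (A ^ n).monotone (hP.le_B _)

theorem le_thompsonWord_apply (l : List ℕ) (t : ℝ) : t ≤ thompsonWord A B l t := by
  induction l generalizing t with
  | nil => exact le_rfl
  | cons i l ih => exact (hP.le_thompsonGen_apply i t).trans (ih _)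

theorem thompsonWord_apply_eq_self {c : ℕ} {l : List ℕ} (hl : ∀ j ∈ l, c ≤ j) {t : ℝ}
    (ht : (t : EReal) ≤ leftEndpoint A x y c) : thompsonWord A B l t = t := by
  induction l with
  | nil => rfl
  | cons i l ih =>
    rw [List.forall_mem_cons] at hl
    have hfix : thompsonGen A B i t = t := apply_eq_of_notMem_supp fun hmem =>
      ((hP.supp_thompsonGen i ▸ hmem).1.trans_le ht).not_ge
        (hP.strictMono_leftEndpoint.monotone hl.1)
    change thompsonWord A B l (thompsonGen A B i t) = t
    rw [hfix, ih hl.2]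

theorem thompsonWord_cons_ne {m : ℕ} (l : List ℕ) {l' : List ℕ} (hl' : ∀ j ∈ l', m < j) :
    thompsonWord A B (m :: l) ≠ thompsonWord A B l' := by
  obtain ⟨t, ht₁, ht₂⟩ := EReal.lt_iff_exists_real_btwn.1
    (hP.strictMono_leftEndpoint (Nat.lt_succ_self m))
  have hmoved : t < thompsonWord A B (m :: l) t :=
    calc t < thompsonGen A B m t := lt_apply_of_mem_supp (hP.le_thompsonGen_apply m)
          (hP.supp_thompsonGen m ▸ ⟨ht₁, ht₂.trans (hP.leftEndpoint_lt _)⟩)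
      _ ≤ thompsonWord A B l (thompsonGen A B m t) := hP.le_thompsonWord_apply l _
  intro heq
  rw [heq, hP.thompsonWord_apply_eq_self hl' ht₂.le] at hmoved
  exact hmoved.false

theorem thompsonWord_injective {l₁ l₂ : List ℕ} (hl₁ : l₁.Pairwise (· ≤ ·))
    (hl₂ : l₂.Pairwise (· ≤ ·)) (heq : thompsonWord A B l₁ = thompsonWord A B l₂) : l₁ = l₂ := by
  induction l₁ generalizing l₂ with
  | nil =>
    cases l₂ with
    | nil => rfl
    | cons m l₂ => exact absurd heq.symm (hP.thompsonWord_cons_ne l₂ (by simp))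
  | cons m₁ l₁ ih =>
    rw [List.pairwise_cons] at hl₁
    cases l₂ with
    | nil => exact absurd heq (hP.thompsonWord_cons_ne l₁ (by simp))
    | cons m₂ l₂ =>
      rw [List.pairwise_cons] at hl₂
      rcases lt_trichotomy m₁ m₂ with h | rfl | h
      · exact absurd heq (hP.thompsonWord_cons_ne l₁ (List.forall_mem_cons.2
          ⟨h, fun j hj => h.trans_le (hl₂.1 j hj)⟩))
      · rw [ih hl₁.2 hl₂.2 (mul_right_cancel heq)]
      · exact absurd heq.symm (hP.thompsonWord_cons_ne l₂ (List.forall_mem_cons.2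
          ⟨h, fun j hj => h.trans_le (hl₁.1 j hj)⟩))

end IsNestedPair

end NestedPair

section ThompsonPairOfHomeos

variable {f g : HomeoR} {x w : EReal} {y z : ℝ}

theorem supp_inv_mul_mul (hxy : x < (y : EReal)) (hsf : supp f = eIoo x (z : EReal))
    (hsg : supp g = eIoo (y : EReal) w) :
    supp (g⁻¹ * (f * g)) = eIoo x ((g⁻¹ z : ℝ) : EReal) := by
  rw [← mul_assoc, ← inv_inv g, inv_inv g⁻¹, supp_conj, hsf]
  refine image_eIoo_coe_right ?_ z
  rw [supp_inv, hsg]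
  exact eIoo_subset_eIoo hxy.le le_top

theorem isNestedPair_mul (hxy : x < (y : EReal)) (hyz : y < z) (hzw : (z : EReal) < w)
    (hsf : supp f = eIoo x (z : EReal)) (hsg : supp g = eIoo (y : EReal) w)
    (hfmono : ∀ t : ℝ, t ≤ f t) (hgmono : ∀ t : ℝ, t ≤ g t) :
    IsNestedPair (f * g) g x y w where
  supp_A := by
    rw [supp_mul_of_le_apply hfmono hgmono, hsf, hsg,
      eIoo_union_eIoo hxy.le (EReal.coe_lt_coe_iff.2 hyz) hzw.le]
  supp_B := hsg
  x_lt_y := hxy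
  y_lt_w := (EReal.coe_lt_coe_iff.2 hyz).trans hzw
  le_A t := (hgmono t).trans (hfmono _)
  le_B := hgmono

theorem isThompsonPair_mul (hxy : x < (y : EReal)) (hyz : y < z) (hzw : (z : EReal) < w)
    (hsf : supp f = eIoo x (z : EReal)) (hsg : supp g = eIoo (y : EReal) w)
    (hfmono : ∀ t : ℝ, t ≤ f t) (hgmono : ∀ t : ℝ, t ≤ g t) (hdyn : z ≤ g (f y)) :
    IsThompsonPair (f * g) g := by
  have hP := isNestedPair_mul hxy hyz hzw hsf hsg hfmono hgmono
  have hgy : g y = y := apply_eq_of_notMem_supp fun h => (hsg ▸ h).1.false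
  have hle : (g⁻¹ z : EReal) ≤ leftEndpoint (f * g) x y 2 := by
    have : g⁻¹ z ≤ f y := by simpa using g⁻¹.monotone hdyn
    simpa [leftEndpoint, hgy] using this
  have hcomm : ∀ n, 2 ≤ n → Commute (g⁻¹ * (f * g)) (thompsonGen (f * g) g n) := fun n hn => by
    refine commute_of_disjoint_supp ?_
    rw [supp_inv_mul_mul hxy hsf hsg, hP.supp_thompsonGen]
    exact disjoint_eIoo (hle.trans (hP.strictMono_leftEndpoint.monotone hn))
  exact ⟨hcomm 2 le_rfl, hcomm 3 (by norm_num)⟩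

end ThompsonPairOfHomeos

/-- If `supp f = (x,z)`, `supp g = (y,w)` with `-∞ ≤ x < y < z < w ≤ ∞`,
both `f` and `g` move points to the right, and `g(f(y)) ≥ z`, then `⟨f,g⟩ ≅ F`. -/
theorem stmt1 (f g : HomeoR) (x w : EReal) (y z : ℝ)
    (hxy : x < (y : EReal)) (hyz : y < z) (hzw : (z : EReal) < w)
    (hsf : supp f = eIoo x (z : EReal)) (hsg : supp g = eIoo (y : EReal) w)
    (hfmono : ∀ t : ℝ, t ≤ f t) (hgmono : ∀ t : ℝ, t ≤ g t)
    (hdyn : z ≤ g (f y)) :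
    Nonempty ((Subgroup.closure {f, g} : Subgroup HomeoR) ≃* ThompsonF) := by
  have hP := isNestedPair_mul hxy hyz hzw hsf hsg hfmono hgmono
  have hT := isThompsonPair_mul hxy hyz hzw hsf hsg hfmono hgmono hdyn
  have hinj := ThompsonF.lift_injective hT fun _ _ hl₁ hl₂ => hP.thompsonWord_injective hl₁ hl₂
  have hrange : (ThompsonF.lift hT).range = Subgroup.closure {f, g} := by
    rw [ThompsonF.range_lift, closure_mul_pair]
  exact ⟨(MulEquiv.subgroupCongr hrange.symm).trans (MonoidHom.ofInjective hinj).symm⟩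
end

section
/- Let X be a non-compact Hausdorff topological space and let H be a nonabelian subgroup of the group Homeo(X) of self-homeomorphisms of X such that every element h ∈ H is compactly supported, i.e., supp h = {x ∈ X | h x ≠ x} is contained in a compact subset of X. If H acts CO-transitively on X, then the commutator subgroup H′ is simple. -/
/-!
Higman's argument. Write `H'` for the commutator subgroup. If `v` pushes the support of `u` off a
compact set `K`, then `⁅u, v⁆` agrees with `u` on `K`; so `H'` is CO-transitive as well, and any
`f ∈ H` becomes an element `f q ∈ H'` after multiplying by some `q` supported away from a given
compact set.

`H'` is perfect: for `a, b ∈ H` choose `a q, b r ∈ H'` with `q` commuting with `b` and `r` with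
`a q`; then `⁅a, b⁆ = ⁅a q, b⁆ = ⁅a q, b r⁆`.

If `N` is normalized by `H'` and contains `g ≠ 1`, then `g` moves some nonempty open `U` off
itself. For `a, b ∈ H'` supported in `U`, the elements `g a⁻¹ g⁻¹` and `a b a⁻¹` have disjoint
supports, which gives `⁅a, b⁆ = ⁅⁅g, a⁻¹⁆, b⁆ ∈ N`; conjugating by `H'` moves any two elements of
`H'` into `U`, hence `H' = ⁅H', H'⁆ ≤ N`.
-/

/-- The group of self-homeomorphisms of a topological space, under composition:
`(f * g) x = f (g x)`. -/
instance homeoGroup {X : Type*} [TopologicalSpace X] : Group (X ≃ₜ X) where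
  mul f g := g.trans f
  one := Homeomorph.refl X
  inv := Homeomorph.symm
  mul_assoc f g h := rfl
  one_mul f := rfl
  mul_one f := rfl
  inv_mul_cancel f := by ext x; exact f.symm_apply_apply x

/-- The support of a self-homeomorphism. -/
def suppX {X : Type*} [TopologicalSpace X] (h : X ≃ₜ X) : Set X := {x : X | h x ≠ x}

open scoped commutatorElement

section Commutator

variable {G : Type*} [Group G]

lemma commutatorElement_mul_left_of_commute {a q b : G} (h : Commute q b) :
    ⁅a * q, b⁆ = ⁅a, b⁆ := by
  rw [commutatorElement_def, commutatorElement_def, mul_assoc a q b, h.eq]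
  group

lemma commutatorElement_mul_right_of_commute {a b r : G} (h : Commute r a) :
    ⁅a, b * r⁆ = ⁅a, b⁆ := by
  have key : ⁅a, b * r⁆ = a * b * (r * a⁻¹) * r⁻¹ * b⁻¹ := by group
  rw [key, h.inv_right.eq]
  group

lemma commutatorElement_eq_of_commute_conj {g a b : G}
    (h : Commute (g * a⁻¹ * g⁻¹) (a * b * a⁻¹)) : ⁅a, b⁆ = ⁅⁅g, a⁻¹⁆, b⁆ := by
  have key : ⁅⁅g, a⁻¹⁆, b⁆ = g * a⁻¹ * g⁻¹ * (a * b * a⁻¹) * (g * a⁻¹ * g⁻¹)⁻¹ * b⁻¹ := by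
    group
  rw [key, h.eq]
  group

lemma Subgroup.commutatorElement_mem_of_le_normalizer {N C : Subgroup G}
    (hC : C ≤ Subgroup.normalizer N) {n c : G} (hn : n ∈ N) (hc : c ∈ C) : ⁅n, c⁆ ∈ N := by
  have key : ⁅n, c⁆ = n * (c * n⁻¹ * c⁻¹) := by group
  rw [key]
  exact mul_mem hn ((Subgroup.mem_normalizer_iff.mp (hC hc) n⁻¹).mp (inv_mem hn))

end Commutator

section Support

variable {X : Type*} [TopologicalSpace X]

@[simp]
lemma mem_suppX {f : X ≃ₜ X} {x : X} : x ∈ suppX f ↔ f x ≠ x := Iff.rfl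

@[simp]
lemma suppX_inv (f : X ≃ₜ X) : suppX f⁻¹ = suppX f := by
  ext x
  simp only [mem_suppX, not_iff_not]
  exact f.symm_apply_eq.trans eq_comm

lemma suppX_conj (u f : X ≃ₜ X) : suppX (u * f * u⁻¹) = u '' suppX f := by
  ext x
  rw [u.image_eq_preimage_symm, Set.mem_preimage, mem_suppX, mem_suppX]
  exact not_congr u.toEquiv.eq_symm_apply.symm

lemma image_subset_of_suppX_subset {f : X ≃ₜ X} {U : Set X} (h : suppX f ⊆ U) : f '' U ⊆ U := by
  rintro _ ⟨x, hx, rfl⟩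
  by_cases hfx : f x = x
  · rwa [hfx]
  · exact h (mt f.injective.eq_iff.mp hfx)

lemma commute_of_disjoint_suppX {f g : X ≃ₜ X} (h : Disjoint (suppX f) (suppX g)) :
    Commute f g := by
  have hperm : Commute f.toEquiv g.toEquiv := Equiv.Perm.Disjoint.commute fun x =>
    or_iff_not_imp_left.mpr fun hfx => not_not.mp (Set.disjoint_left.mp h hfx)
  ext x
  exact Equiv.congr_fun hperm.eq x

lemma commutatorElement_mem_of_suppX_subset {C N : Subgroup (X ≃ₜ X)}
    (hC : C ≤ Subgroup.normalizer N) {g : X ≃ₜ X} (hg : g ∈ N) {U : Set X}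
    (hU : Disjoint (g '' U) U) {a b : X ≃ₜ X} (ha : a ∈ C) (hb : b ∈ C)
    (haU : suppX a ⊆ U) (hbU : suppX b ⊆ U) : ⁅a, b⁆ ∈ N := by
  have hcomm : Commute (g * a⁻¹ * g⁻¹) (a * b * a⁻¹) := by
    refine commute_of_disjoint_suppX (hU.mono ?_ ?_)
    · rw [suppX_conj, suppX_inv]
      exact Set.image_mono haU
    · rw [suppX_conj]
      exact (Set.image_mono hbU).trans (image_subset_of_suppX_subset haU)
  rw [commutatorElement_eq_of_commute_conj hcomm]
  exact Subgroup.commutatorElement_mem_of_le_normalizer hC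
    (Subgroup.commutatorElement_mem_of_le_normalizer hC hg (inv_mem ha)) hb

lemma exists_isOpen_disjoint_image_self [T2Space X] {g : X ≃ₜ X} (hg : g ≠ 1) :
    ∃ U : Set X, IsOpen U ∧ U.Nonempty ∧ Disjoint (g '' U) U := by
  obtain ⟨x, hx⟩ : ∃ x, g x ≠ x := not_forall.mp fun h => hg (Homeomorph.ext h)
  obtain ⟨A, B, hA, hB, hxA, hxB, hAB⟩ := t2_separation hx
  refine ⟨B ∩ g ⁻¹' A, hB.inter (hA.preimage g.continuous), ⟨x, hxB, hxA⟩, ?_⟩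
  refine hAB.mono ?_ Set.inter_subset_left
  rintro _ ⟨y, hy, rfl⟩
  exact hy.2

end Support

namespace Subgroup

variable {X : Type*} [TopologicalSpace X]

def IsCompactlySupported (H : Subgroup (X ≃ₜ X)) : Prop :=
  ∀ h ∈ H, ∃ K : Set X, IsCompact K ∧ suppX h ⊆ K

def IsCOTransitive (H : Subgroup (X ≃ₜ X)) : Prop :=
  ∀ A : Set X, IsCompact A → A ≠ Set.univ →
    ∀ B : Set X, IsOpen B → B.Nonempty → ∃ u ∈ H, u '' A ⊆ B

variable [T2Space X] [NoncompactSpace X] {H : Subgroup (X ≃ₜ X)}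

lemma IsCOTransitive.commutator (hco : H.IsCOTransitive) (hcpt : H.IsCompactlySupported) :
    (⁅H, H⁆ : Subgroup (X ≃ₜ X)).IsCOTransitive := by
  intro K hK _ U hU hUne
  obtain ⟨u, hu, huK⟩ := hco K hK hK.ne_univ U hU hUne
  obtain ⟨L, hL, hsu⟩ := hcpt u hu
  have hKL : IsCompact (K ∪ L) := hK.union hL
  obtain ⟨v, hv, hvKL⟩ := hco (K ∪ L) hKL hKL.ne_univ (K ∪ L)ᶜ hKL.isClosed.isOpen_compl
    (Set.nonempty_compl.mpr hKL.ne_univ)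
  refine ⟨⁅u, v⁆, commutator_mem_commutator hu hv, ?_⟩
  rintro _ ⟨x, hx, rfl⟩
  have hfix : (v * u⁻¹ * v⁻¹) x = x := not_not.mp fun hmov => by
    replace hmov : x ∈ suppX (v * u⁻¹ * v⁻¹) := hmov
    rw [suppX_conj, suppX_inv] at hmov
    exact hvKL (Set.image_mono (hsu.trans Set.subset_union_right) hmov) (Or.inl hx)
  have hw : ⁅u, v⁆ = u * (v * u⁻¹ * v⁻¹) := by group
  rw [hw, Homeomorph.mul_apply, hfix]
  exact huK ⟨x, hx, rfl⟩

lemma IsCOTransitive.exists_mul_mem_commutator (hco : H.IsCOTransitive)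
    (hcpt : H.IsCompactlySupported) {f : X ≃ₜ X} (hf : f ∈ H) {L : Set X} (hL : IsCompact L) :
    ∃ q : X ≃ₜ X, f * q ∈ ⁅H, H⁆ ∧ Disjoint (suppX q) L := by
  obtain ⟨K, hK, hsf⟩ := hcpt f hf
  have hKL : IsCompact (K ∪ L) := hK.union hL
  obtain ⟨w, hw, hwKL⟩ := hco.commutator hcpt (K ∪ L) hKL hKL.ne_univ (K ∪ L)ᶜ
    hKL.isClosed.isOpen_compl (Set.nonempty_compl.mpr hKL.ne_univ)
  refine ⟨w * f⁻¹ * w⁻¹, ?_, ?_⟩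
  · have hfq : f * (w * f⁻¹ * w⁻¹) = ⁅f, w⁆ := by group
    rw [hfq]
    exact commutator_mem_commutator hf (commutator_le_self H hw)
  · rw [suppX_conj, suppX_inv]
    exact disjoint_compl_left.mono
      ((Set.image_mono (hsf.trans Set.subset_union_left)).trans hwKL) Set.subset_union_right

lemma IsCOTransitive.commutator_le_commutator_commutator (hco : H.IsCOTransitive)
    (hcpt : H.IsCompactlySupported) : ⁅H, H⁆ ≤ ⁅⁅H, H⁆, ⁅H, H⁆⁆ := by
  rw [commutator_le]
  intro a ha b hb
  obtain ⟨K, hK, hsb⟩ := hcpt b hb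
  obtain ⟨q, haq, hq⟩ := hco.exists_mul_mem_commutator hcpt ha hK
  obtain ⟨L, hL, hsx⟩ := hcpt (a * q) (commutator_le_self H haq)
  obtain ⟨r, hbr, hr⟩ := hco.exists_mul_mem_commutator hcpt hb hL
  have hqb : Commute q b := commute_of_disjoint_suppX (hq.mono_right hsb)
  have hrx : Commute r (a * q) := commute_of_disjoint_suppX (hr.mono_right hsx)
  rw [← commutatorElement_mul_left_of_commute hqb, ← commutatorElement_mul_right_of_commute hrx]
  exact commutator_mem_commutator haq hbr

lemma IsCOTransitive.commutator_commutator_le (hco : H.IsCOTransitive)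
    (hcpt : H.IsCompactlySupported) {N : Subgroup (X ≃ₜ X)} (hN : ⁅H, H⁆ ≤ normalizer N)
    {g : X ≃ₜ X} (hgN : g ∈ N) (hg : g ≠ 1) : ⁅⁅H, H⁆, ⁅H, H⁆⁆ ≤ N := by
  obtain ⟨U, hU, hUne, hgU⟩ := exists_isOpen_disjoint_image_self hg
  rw [commutator_le]
  intro a ha b hb
  obtain ⟨Ka, hKa, hsa⟩ := hcpt a (commutator_le_self H ha)
  obtain ⟨Kb, hKb, hsb⟩ := hcpt b (commutator_le_self H hb)
  have hK : IsCompact (Ka ∪ Kb) := hKa.union hKb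
  obtain ⟨u, hu, huK⟩ := hco.commutator hcpt (Ka ∪ Kb) hK hK.ne_univ U hU hUne
  have hconj : ∀ c ∈ ⁅H, H⁆, suppX c ⊆ Ka ∪ Kb →
      u * c * u⁻¹ ∈ ⁅H, H⁆ ∧ suppX (u * c * u⁻¹) ⊆ U := fun c hc hcK =>
    ⟨mul_mem (mul_mem hu hc) (inv_mem hu), (suppX_conj u c).trans_subset
      ((Set.image_mono hcK).trans huK)⟩
  obtain ⟨ha', haU⟩ := hconj a ha (hsa.trans Set.subset_union_left)
  obtain ⟨hb', hbU⟩ := hconj b hb (hsb.trans Set.subset_union_right)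
  rw [(mem_normalizer_iff.mp (hN hu) _), conjugate_commutatorElement]
  exact commutatorElement_mem_of_suppX_subset hN hgN hgU ha' hb' haU hbU

lemma IsCOTransitive.isSimpleGroup_commutator (hco : H.IsCOTransitive)
    (hcpt : H.IsCompactlySupported) (hne : ⁅H, H⁆ ≠ ⊥) :
    IsSimpleGroup (⁅H, H⁆ : Subgroup (X ≃ₜ X)) := by
  refine Subgroup.isSimpleGroup_iff.mpr ⟨hne, fun N hle hnormal => ?_⟩
  obtain hbot | ⟨g, hgN, hg⟩ := N.bot_or_exists_ne_one
  · exact Or.inl hbot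
  have hN : ⁅H, H⁆ ≤ normalizer N := (normal_subgroupOf_iff_le_normalizer hle).mp hnormal
  exact Or.inr (le_antisymm hle ((hco.commutator_le_commutator_commutator hcpt).trans
    (hco.commutator_commutator_le hcpt hN hgN hg)))

end Subgroup

/-- **Higman's method.** Let `X` be a non-compact Hausdorff space and
`H` a nonabelian group of compactly supported self-homeomorphisms of `X`.  If `H` acts
CO-transitively, then the commutator subgroup `H'` is simple. -/
theorem stmt14 {X : Type*} [TopologicalSpace X] [T2Space X] [NoncompactSpace X]
    (H : Subgroup (X ≃ₜ X))
    (hna : ∃ g h : ↥H, g * h ≠ h * g)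
    (hcpt : ∀ h ∈ H, ∃ K : Set X, IsCompact K ∧ suppX h ⊆ K)
    (hco : ∀ A : Set X, IsCompact A → A ≠ Set.univ →
      ∀ B : Set X, IsOpen B → B.Nonempty → ∃ u ∈ H, u '' A ⊆ B) :
    IsSimpleGroup ↥(commutator ↥H) := by
  have hne : ⁅H, H⁆ ≠ ⊥ := by
    obtain ⟨g, h, hgh⟩ := hna
    intro hbot
    have hgh' := Subgroup.commutator_mem_commutator g.2 h.2
    rw [hbot, Subgroup.mem_bot, commutatorElement_eq_one_iff_mul_comm] at hgh'
    exact hgh (Subtype.ext hgh')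
  have hsimple : IsSimpleGroup (⁅H, H⁆ : Subgroup (X ≃ₜ X)) :=
    Subgroup.IsCOTransitive.isSimpleGroup_commutator hco hcpt hne
  exact ((commutator H).equivMapOfInjective H.subtype H.subtype_injective |>.trans
    (MulEquiv.subgroupCongr H.map_subtype_commutator)).isSimpleGroup
end

section
/- Let X be a topological space and let G ≤ Homeo(X) be a subgroup whose action is minimal (every G-orbit is dense in X) and locally CO-transitive. Then G acts CO-transitively on X. -/
namespace Homeomorph

variable {X : Type*} [TopologicalSpace X]

theorem image_homeoGroup_mul (f g : X ≃ₜ X) (A : Set X) : ⇑(f * g) '' A = f '' (g '' A) :=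
  (Set.image_image f g A).symm

theorem exists_mem_image_subset_of_dense_orbit {G : Subgroup (X ≃ₜ X)} {A : Set X} {x : X}
    (hx : ∀ B : Set X, IsOpen B → x ∈ B → ∃ u ∈ G, u '' A ⊆ B)
    (hdense : Dense {y : X | ∃ g ∈ G, g x = y}) {B : Set X} (hB : IsOpen B)
    (hBne : B.Nonempty) : ∃ u ∈ G, u '' A ⊆ B := by
  obtain ⟨_, ⟨g, hgG, rfl⟩, hgxB⟩ := hdense.exists_mem_open hB hBne
  obtain ⟨u, huG, hu⟩ := hx (g ⁻¹' B) (hB.preimage g.continuous) hgxB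
  refine ⟨g * u, G.mul_mem hgG huG, ?_⟩
  rw [image_homeoGroup_mul]
  exact Set.image_subset_iff.mpr hu

end Homeomorph

/-- A minimal, locally CO-transitive group of self-homeomorphisms
acts CO-transitively. -/
theorem stmt15 {X : Type*} [TopologicalSpace X] (G : Subgroup (X ≃ₜ X))
    (hmin : ∀ x : X, Dense {y : X | ∃ g ∈ G, g x = y})
    (hloc : ∀ A : Set X, IsCompact A → A ≠ Set.univ →
      ∃ x : X, ∀ B : Set X, IsOpen B → x ∈ B → ∃ u ∈ G, u '' A ⊆ B) :
    ∀ A : Set X, IsCompact A → A ≠ Set.univ →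
      ∀ B : Set X, IsOpen B → B.Nonempty → ∃ u ∈ G, u '' A ⊆ B := by
  intro A hA hAne B hB hBne
  obtain ⟨x, hx⟩ := hloc A hA hAne
  exact Homeomorph.exists_mem_image_subset_of_dense_orbit hx (hmin x) hB hBne
end

section
/- There exists a family (G_i)_{i ∈ I} of subgroups of Homeo⁺(ℝ) indexed by an uncountable set I such that each G_i is generated by two elements and for all i ≠ j the groups G_i and G_j are not isomorphic. -/
/-!
For `S ⊆ ℕ` let `A_S` act on each interval `[k, k + 1)` by a homeomorphism `u` of `[0, 1)` if
`k = 0`, by a homeomorphism `v` not commuting with `u` if `k - 1 ∈ S`, and trivially otherwise,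
and let `T` be the translation by `1`. Then `A_S` commutes with `T^(n+1) A_S T^-(n+1)` exactly
when `n ∉ S`, so the kernel of the marking `F₂ → ⟨A_S, T⟩` determines `S`. An isomorphism between
two of these groups transports markings, and a countable group has only countably many markings
by `F₂`; hence each isomorphism class contains only countably many `S`, and there are uncountably
many classes.
-/

noncomputable section

open Set Function

def mulEquivSetoid {α : Type*} (G : α → Type*) [∀ a, Group (G a)] : Setoid α where
  r a b := Nonempty (G a ≃* G b)
  iseqv := ⟨fun _ => ⟨.refl _⟩, fun ⟨e⟩ => ⟨e.symm⟩, fun ⟨e⟩ ⟨f⟩ => ⟨e.trans f⟩⟩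

lemma countable_setOf_nonempty_mulEquiv {α ι : Type*} [Finite ι] {G : α → Type*}
    [∀ a, Group (G a)] (π : ∀ a, FreeGroup ι →* G a) (hπ : Injective fun a => (π a).ker)
    (a : α) (ha : Surjective (π a)) : {b | Nonempty (G b ≃* G a)}.Countable := by
  have : Countable (G a) := ha.countable
  have : Countable (FreeGroup ι →* G a) := FreeGroup.lift.symm.injective.countable
  let transport (b : {b | Nonempty (G b ≃* G a)}) : FreeGroup ι →* G a :=
    (b.2.some : G b ≃* G a).toMonoidHom.comp (π b)
  refine Set.countable_coe_iff.1 (Injective.countable (f := transport) fun b c hbc => ?_)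
  have hker : (π b).ker = (π c).ker := by
    rw [← MonoidHom.ker_mulEquiv_comp (π b) b.2.some,
      ← MonoidHom.ker_mulEquiv_comp (π c) c.2.some]
    exact congrArg MonoidHom.ker hbc
  exact Subtype.ext (hπ hker)

lemma uncountable_quotient {α : Type*} [Uncountable α] (s : Setoid α)
    (hs : ∀ a, {b | s b a}.Countable) : Uncountable (Quotient s) := by
  by_contra h
  have : Countable (Quotient s) := not_uncountable_iff.1 h
  have hcover : (⋃ q : Quotient s, {b | s b q.out}) = univ :=
    eq_univ_of_forall fun b => mem_iUnion.2 ⟨⟦b⟧, Quotient.mk_out b |> s.symm⟩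
  exact not_countable_univ (hcover ▸ countable_iUnion fun q : Quotient s => hs q.out)

lemma uncountable_set_nat : Uncountable (Set ℕ) := by
  rw [← Cardinal.aleph0_lt_mk_iff, Cardinal.mk_set, Cardinal.mk_nat]
  exact Cardinal.cantor _

section Code

variable {K : Type*} [Group K] (u v : K) (S : Set ℕ)

open Classical in
def setCode (k : ℤ) : K :=
  if k = 0 then u else if ∃ n ∈ S, k = n + 1 then v else 1

variable {u v S}

lemma setCode_zero : setCode u v S 0 = u := if_pos rfl

lemma setCode_eq_one_of_neg {k : ℤ} (hk : k < 0) : setCode u v S k = 1 := by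
  have : ¬∃ n ∈ S, k = n + 1 := by rintro ⟨n, -, rfl⟩; omega
  simp [setCode, hk.ne, this]

lemma setCode_eq_or_eq_one {k : ℤ} (hk : k ≠ 0) :
    setCode u v S k = v ∨ setCode u v S k = 1 := by
  rw [setCode, if_neg hk]
  split_ifs <;> simp

lemma setCode_natCast_add_one_of_mem {n : ℕ} (hn : n ∈ S) : setCode u v S (n + 1) = v := by
  simp [setCode, show (n : ℤ) + 1 ≠ 0 by omega, hn]

lemma setCode_natCast_add_one_of_notMem {n : ℕ} (hn : n ∉ S) : setCode u v S (n + 1) = 1 := by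
  simp [setCode, show (n : ℤ) + 1 ≠ 0 by omega, hn]

lemma commute_setCode_shift_iff (huv : ¬Commute u v) (n : ℕ) :
    Commute (setCode u v S) (fun k => setCode u v S (k - (n + 1))) ↔ n ∉ S := by
  rw [Pi.commute_iff]
  constructor
  · intro h hn
    have := h (n + 1)
    rw [setCode_natCast_add_one_of_mem hn, sub_self, setCode_zero] at this
    exact huv this.symm
  · intro hn k
    by_cases hk : k = 0
    · rw [hk, setCode_eq_one_of_neg (k := 0 - (n + 1)) (by omega)]
      exact Commute.one_right _
    by_cases hkn : k = n + 1
    · rw [hkn, setCode_natCast_add_one_of_notMem hn]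
      exact Commute.one_left _
    rcases setCode_eq_or_eq_one (u := u) (v := v) (S := S) hk with h | h <;>
      rcases setCode_eq_or_eq_one (u := u) (v := v) (S := S) (sub_ne_zero.2 hkn) with h' | h' <;>
      simp [h, h']

end Code

local notation "𝕀" => Ico (0 : ℝ) 1

def icoOrderIsoOfStrictMonoOn (f : ℝ → ℝ) (hf : StrictMonoOn f (Icc 0 1))
    (hc : ContinuousOn f (Icc 0 1)) (h0 : f 0 = 0) (h1 : f 1 = 1) : 𝕀 ≃o 𝕀 :=
  ((hf.mono Ico_subset_Icc_self).orderIso f 𝕀).trans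
    (OrderIso.setCongr _ _ (by rw [hc.image_Ico_of_strictMonoOn zero_le_one hf, h0, h1]))

namespace HomeoR

def glueFun (c : ℤ → 𝕀 ≃o 𝕀) (x : ℝ) : ℝ :=
  ⌊x⌋ + c ⌊x⌋ ⟨Int.fract x, Int.fract_nonneg x, Int.fract_lt_one x⟩

lemma glueFun_intCast_add (c : ℤ → 𝕀 ≃o 𝕀) (k : ℤ) (t : 𝕀) :
    glueFun c (k + t) = k + c k t := by
  have hfloor : ⌊(k : ℝ) + t⌋ = k := by
    rw [Int.floor_intCast_add, Int.floor_eq_zero_iff.2 t.2, add_zero]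
  have hfract : Int.fract ((k : ℝ) + t) = t := by
    rw [Int.fract_intCast_add, Int.fract_eq_self.2 t.2]
  simp only [glueFun, hfloor, hfract]

lemma exists_intCast_add (x : ℝ) : ∃ (k : ℤ) (t : 𝕀), x = k + t :=
  ⟨⌊x⌋, ⟨Int.fract x, Int.fract_nonneg x, Int.fract_lt_one x⟩,
    (Int.floor_add_fract x).symm⟩

lemma glueFun_one : glueFun 1 = id := by
  ext x
  obtain ⟨k, t, rfl⟩ := exists_intCast_add x
  simp [glueFun_intCast_add]

lemma glueFun_mul (c d : ℤ → 𝕀 ≃o 𝕀) : glueFun (c * d) = glueFun c ∘ glueFun d := by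
  ext x
  obtain ⟨k, t, rfl⟩ := exists_intCast_add x
  simp only [comp_apply, glueFun_intCast_add]
  rfl

lemma monotone_glueFun (c : ℤ → 𝕀 ≃o 𝕀) : Monotone (glueFun c) := by
  intro x y hxy
  obtain ⟨k, s, rfl⟩ := exists_intCast_add x
  obtain ⟨l, t, rfl⟩ := exists_intCast_add y
  rw [glueFun_intCast_add, glueFun_intCast_add]
  rcases lt_trichotomy k l with hkl | rfl | hlk
  · have : (k : ℝ) + 1 ≤ l := by exact_mod_cast hkl
    linarith [(c k s).2.2, (c l t).2.1]
  · have hst : s ≤ t := by simpa using hxy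
    simpa using (c k).monotone hst
  · have : (l : ℝ) + 1 ≤ k := by exact_mod_cast hlk
    linarith [s.2.1, t.2.2]

def glue (c : ℤ → 𝕀 ≃o 𝕀) : ℝ ≃o ℝ :=
  Equiv.toOrderIso
    { toFun := glueFun c
      invFun := glueFun c⁻¹
      left_inv x := by
        rw [← comp_apply (f := glueFun c⁻¹), ← glueFun_mul, inv_mul_cancel, glueFun_one, id]
      right_inv x := by
        rw [← comp_apply (f := glueFun c), ← glueFun_mul, mul_inv_cancel, glueFun_one, id] }
    (monotone_glueFun c) (monotone_glueFun c⁻¹)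

def glueHom : (ℤ → 𝕀 ≃o 𝕀) →* ℝ ≃o ℝ where
  toFun := glue
  map_one' := by ext x; simp [glue, glueFun_one]
  map_mul' c d := by ext x; simp [glue, glueFun_mul]

lemma glueHom_apply_intCast_add (c : ℤ → 𝕀 ≃o 𝕀) (k : ℤ) (t : 𝕀) :
    glueHom c (k + t) = k + c k t :=
  glueFun_intCast_add c k t

lemma glueHom_injective : Injective glueHom := by
  intro c d h
  ext k t
  simpa [glueHom_apply_intCast_add] using DFunLike.congr_fun h ((k : ℝ) + t)

lemma addRight_mul_glueHom (c : ℤ → 𝕀 ≃o 𝕀) (m : ℤ) :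
    OrderIso.addRight (m : ℝ) * glueHom c =
      glueHom (fun k => c (k - m)) * OrderIso.addRight (m : ℝ) := by
  ext x
  obtain ⟨k, t, rfl⟩ := exists_intCast_add x
  have : (k : ℝ) + t + m = ((k + m : ℤ) : ℝ) + t := by push_cast; ring
  simp only [RelIso.coe_mul, comp_apply, OrderIso.addRight_apply, glueHom_apply_intCast_add, this,
    add_sub_cancel_right]
  push_cast
  ring

lemma addRight_one_pow (m : ℕ) :
    OrderIso.addRight (1 : ℝ) ^ m = OrderIso.addRight (m : ℝ) := by
  induction m with
  | zero => ext; simp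
  | succ m ih => ext x; simp [pow_succ, ih]; ring

def blockU : 𝕀 ≃o 𝕀 :=
  icoOrderIsoOfStrictMonoOn (· ^ 2)
    (fun _ hs _ _ hst => by dsimp only; nlinarith [hs.1]) (by fun_prop) (by norm_num) (by norm_num)

def blockV : 𝕀 ≃o 𝕀 :=
  icoOrderIsoOfStrictMonoOn (fun t => 2 * t - t ^ 2)
    (fun _ _ _ ht hst => by dsimp only; nlinarith [ht.2]) (by fun_prop) (by norm_num) (by norm_num)

lemma not_commute_blockU_blockV : ¬Commute blockU blockV := by
  intro h
  have := congrArg Subtype.val (DFunLike.congr_fun h.eq ⟨1 / 2, by norm_num, by norm_num⟩)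
  change (2 * (1 / 2 : ℝ) - (1 / 2) ^ 2) ^ 2 = 2 * (1 / 2) ^ 2 - ((1 / 2) ^ 2) ^ 2 at this
  norm_num at this

def translation : ℝ ≃o ℝ := OrderIso.addRight 1

def homeoOfSet (S : Set ℕ) : ℝ ≃o ℝ := glueHom (setCode blockU blockV S)

def marking (S : Set ℕ) : FreeGroup (Fin 2) →* ℝ ≃o ℝ :=
  FreeGroup.lift ![homeoOfSet S, translation]

lemma range_marking (S : Set ℕ) :
    (marking S).range = Subgroup.closure {homeoOfSet S, translation} := by
  rw [marking, FreeGroup.range_lift_eq_closure, Matrix.range_cons_cons_empty]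

open scoped commutatorElement in
def conjugateCommutatorWord (m : ℕ) : FreeGroup (Fin 2) :=
  ⁅FreeGroup.of (0 : Fin 2), FreeGroup.of 1 ^ m * FreeGroup.of 0 * (FreeGroup.of 1 ^ m)⁻¹⁆

lemma conjugateCommutatorWord_mem_ker_marking_iff (S : Set ℕ) (n : ℕ) :
    conjugateCommutatorWord (n + 1) ∈ (marking S).ker ↔ n ∉ S := by
  have hconj : translation ^ (n + 1) * homeoOfSet S * (translation ^ (n + 1))⁻¹ =
      glueHom (fun k => setCode blockU blockV S (k - (n + 1))) := by
    rw [translation, addRight_one_pow, mul_inv_eq_iff_eq_mul, homeoOfSet]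
    exact_mod_cast addRight_mul_glueHom _ ((n + 1 : ℕ) : ℤ)
  rw [MonoidHom.mem_ker, conjugateCommutatorWord, map_commutatorElement,
    commutatorElement_eq_one_iff_commute]
  simp only [marking, map_mul, map_inv, map_pow, FreeGroup.lift_apply_of, Matrix.cons_val_zero,
    Matrix.cons_val_one, hconj]
  rw [homeoOfSet, commute_map_iff glueHom_injective]
  exact commute_setCode_shift_iff not_commute_blockU_blockV n

lemma injective_ker_marking : Injective fun S => (marking S).ker := by
  intro S T h
  ext n
  simpa only [conjugateCommutatorWord_mem_ker_marking_iff, not_iff_not] using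
    SetLike.ext_iff.1 h (conjugateCommutatorWord (n + 1))

end HomeoR

end

/-- There are uncountably many pairwise non-isomorphic two-generated
subgroups of `Homeo⁺(ℝ)`. -/
theorem stmt16 :
    ∃ (I : Type) (G : I → Subgroup HomeoR),
      ¬Countable I ∧
      (∀ i, ∃ x y : HomeoR, G i = Subgroup.closure {x, y}) ∧
      (∀ i j, i ≠ j → IsEmpty (↥(G i) ≃* ↥(G j))) := by
  let H (S : Set ℕ) : Subgroup HomeoR := (HomeoR.marking S).range
  have hker : Function.Injective fun S => (HomeoR.marking S).rangeRestrict.ker := by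
    simpa only [MonoidHom.ker_rangeRestrict] using HomeoR.injective_ker_marking
  have : Uncountable (Set ℕ) := uncountable_set_nat
  have : Uncountable (Quotient (mulEquivSetoid fun S => H S)) :=
    uncountable_quotient _ fun S =>
      countable_setOf_nonempty_mulEquiv _ hker S (HomeoR.marking S).rangeRestrict_surjective
  exact ⟨Quotient (mulEquivSetoid fun S => H S), fun i => H i.out, not_countable,
    fun i => ⟨_, _, HomeoR.range_marking i.out⟩,
    fun i j hij => ⟨fun e => hij (Quotient.out_equiv_out.1 ⟨e⟩)⟩⟩
end

section
/- Let X be a connected topological space and let G be a subgroup of the group Homeo(X) of self-homeomorphisms of X. Then every G-orbit is dense in X if and only if for every x ∈ X the closure of the orbit G·x = {g x | g ∈ G} has nonempty interior. -/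
open Set MulAction Pointwise

section OrbitClosure

variable {G X : Type*} [Group G] [TopologicalSpace X] [MulAction G X] [ContinuousConstSMul G X]

theorem closure_orbit_subset_of_mem_closure {x y : X} (hy : y ∈ closure (orbit G x)) :
    closure (orbit G y) ⊆ closure (orbit G x) :=
  closure_minimal (fun _ ⟨g, hg⟩ ↦ hg ▸ smul_closure_orbit_subset g x ⟨y, hy, rfl⟩)
    isClosed_closure

theorem smul_interior_closure_orbit_subset (g : G) (x : X) :
    g • interior (closure (orbit G x)) ⊆ interior (closure (orbit G x)) := by
  rw [← interior_smul]
  exact interior_mono (smul_closure_orbit_subset g x)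

theorem mem_interior_closure_orbit_of_nonempty {x : X}
    (h : (interior (closure (orbit G x))).Nonempty) :
    x ∈ interior (closure (orbit G x)) := by
  obtain ⟨z, hz⟩ := h
  obtain ⟨_, hgx, g, rfl⟩ := mem_closure_iff.mp (interior_subset hz) _ isOpen_interior hz
  simpa using smul_interior_closure_orbit_subset g⁻¹ x (smul_mem_smul_set hgx)

theorem isOpen_closure_orbit_of_forall_nonempty
    (h : ∀ y : X, (interior (closure (orbit G y))).Nonempty) (x : X) :
    IsOpen (closure (orbit G x)) :=
  isOpen_iff_mem_nhds.mpr fun y hy ↦ Filter.mem_of_superset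
    (mem_interior_iff_mem_nhds.mp (mem_interior_closure_orbit_of_nonempty (h y)))
    (closure_orbit_subset_of_mem_closure hy)

theorem forall_dense_orbit_iff_forall_nonempty_interior_closure [PreconnectedSpace X] :
    (∀ x : X, Dense (orbit G x)) ↔ ∀ x : X, (interior (closure (orbit G x))).Nonempty := by
  refine ⟨fun h x ↦ ⟨x, by simp [(h x).closure_eq]⟩, fun h x ↦ ?_⟩
  exact dense_iff_closure_eq.mpr <|
    IsClopen.eq_univ ⟨isClosed_closure, isOpen_closure_orbit_of_forall_nonempty h x⟩
      (nonempty_orbit x).closure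

end OrbitClosure

namespace Homeomorph

variable {X : Type*} [TopologicalSpace X]

instance applyMulAction : MulAction (X ≃ₜ X) X where
  smul f x := f x
  one_smul _ := rfl
  mul_smul _ _ _ := rfl

instance subgroup_continuousConstSMul (G : Subgroup (X ≃ₜ X)) : ContinuousConstSMul G X :=
  ⟨fun g ↦ g.1.continuous⟩

theorem orbit_subgroup_eq (G : Subgroup (X ≃ₜ X)) (x : X) :
    orbit G x = {y : X | ∃ g ∈ G, g x = y} := by
  ext y
  exact ⟨fun ⟨g, hg⟩ ↦ ⟨g, g.2, hg⟩, fun ⟨g, hgG, hg⟩ ↦ ⟨⟨g, hgG⟩, hg⟩⟩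

end Homeomorph

/-- For a group `G` of self-homeomorphisms of a connected space `X`,
every `G`-orbit is dense if and only if the closure of every `G`-orbit has nonempty
interior (i.e. every orbit is non-nowhere dense). -/
theorem stmt18 {X : Type*} [TopologicalSpace X] [ConnectedSpace X]
    (G : Subgroup (X ≃ₜ X)) :
    (∀ x : X, Dense {y : X | ∃ g ∈ G, g x = y}) ↔
      (∀ x : X, (interior (closure {y : X | ∃ g ∈ G, g x = y})).Nonempty) := by
  simpa only [Homeomorph.orbit_subgroup_eq] using
    forall_dense_orbit_iff_forall_nonempty_interior_closure (G := G) (X := X)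
end
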